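/- arXiv:1604.01299 — 2 statements merged into one kernel-verified Lean document; each statement's English description precedes it below -/
import Mathlib

section
/- Let $(\Omega, \phi)$ be a finite probability space of configurations $\omega \in \{0,1\}^E$ for a finite edge set $E$, and let $\mu$ be the uniform measure on a finite set $\mathcal{O}$ of orderings; let $\nu = \phi \otimes \mu$. Suppose $\mathcal{E}, \mathcal{F} \subseteq \{0,1\}^E \times \mathcal{O}$ and $\Psi : \mathcal{E} \to 2^{\mathcal{F}}$ satisfy: (1) if $(\omega',\preceq') \in \Psi(\omega,\preceq)$ then $\preceq' = \preceq$; (2) there is $t > 0$ with $|\Psi(\omega,\preceq)| \geq t$ for all $(\omega,\preceq) \in \mathcal{E}$; (3) there is $s \in \mathbb{N}$ such that for each $(\omega',\preceq) \in \mathcal{F}$ there is a set $S(\omega',\preceq)$ of at most $s$ edges such that every $\omega$ with $(\omega',\preceq) \in \Psi(\omega,\preceq)$ differs from $\omega'$ only on $S(\omega',\preceq)$; (4) for any two configurations $\omega, \omega'$ differing on at most $s$ edges, $\phi(\omega) \leq C^s \phi(\omega')$ where $C = q/\min\{p, 1-p\}$ for fixed $p \in (0,1)$, $q \geq 1$. Then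 $\nu(\mathcal{E}) \leq \frac{1}{t} (2C)^s \nu(\mathcal{F})$. -/
/-!
Double counting: summing `ν` over the pairs `(x, y)` with `y ∈ Ψ x` gives at least `t ν(𝓔)`.
Grouped by `y` instead, the preimages of `y` agree with `y` off the at most `s` edges of
`S y` and share its ordering, so there are at most `2 ^ s` of them, and by finite energy
each has weight at most `C ^ s ν(y)`.
-/

open Finset

theorem mul_sum_le_mul_sum_of_sum_preimage_le {α β : Type*} [DecidableEq β]
    {𝓔 : Finset α} {𝓕 : Finset β} {Ψ : α → Finset β} (hΨ : ∀ x ∈ 𝓔, Ψ x ⊆ 𝓕)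
    {w : α → ℝ} {v : β → ℝ} (hw : ∀ x ∈ 𝓔, 0 ≤ w x) {t K : ℝ}
    (ht : ∀ x ∈ 𝓔, t ≤ #(Ψ x))
    (hpre : ∀ y ∈ 𝓕, ∑ x ∈ 𝓔 with y ∈ Ψ x, w x ≤ K * v y) :
    t * ∑ x ∈ 𝓔, w x ≤ K * ∑ y ∈ 𝓕, v y := by
  have hswap : ∑ x ∈ 𝓔, ∑ _y ∈ Ψ x, w x = ∑ y ∈ 𝓕, ∑ x ∈ 𝓔 with y ∈ Ψ x, w x :=
    sum_comm' fun x y => by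
      simp only [mem_filter]
      exact ⟨fun h => ⟨⟨h.1, h.2⟩, hΨ x h.1 h.2⟩, fun h => h.1⟩
  calc t * ∑ x ∈ 𝓔, w x
      ≤ ∑ x ∈ 𝓔, ∑ _y ∈ Ψ x, w x := by
        rw [mul_sum]
        refine sum_le_sum fun x hx => ?_
        rw [sum_const, nsmul_eq_mul]
        exact mul_le_mul_of_nonneg_right (ht x hx) (hw x hx)
    _ = ∑ y ∈ 𝓕, ∑ x ∈ 𝓔 with y ∈ Ψ x, w x := hswap
    _ ≤ ∑ y ∈ 𝓕, K * v y := sum_le_sum hpre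
    _ = K * ∑ y ∈ 𝓕, v y := (mul_sum _ _ _).symm

theorem card_le_pow_of_eqOn_compl {ι β : Type*} [Fintype β] {P : Finset (ι → β)}
    (S : Finset ι) (g : ι → β) (hP : ∀ f ∈ P, ∀ i ∉ S, f i = g i) :
    #P ≤ Fintype.card β ^ #S := by
  classical
  have hinj : Set.InjOn (fun (f : ι → β) (i : S) => f i) P := by
    intro f hf f' hf' hff'
    funext i
    by_cases hi : i ∈ S
    · exact congrFun hff' ⟨i, hi⟩
    · rw [hP f hf i hi, hP f' hf' i hi]
  calc #P ≤ #(univ : Finset (S → β)) :=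
        card_le_card_of_injOn _ (fun _ _ => mem_coe.2 (mem_univ _)) hinj
    _ = Fintype.card β ^ #S := by
        rw [card_univ, Fintype.card_fun, Fintype.card_coe]

def FiniteEnergy {E β : Type*} [Fintype E] [DecidableEq β] (φ : (E → β) → ℝ) (C : ℝ) (s : ℕ) :
    Prop :=
  ∀ ω ω' : E → β, #{e | ω e ≠ ω' e} ≤ s → φ ω ≤ C ^ s * φ ω'

namespace FiniteEnergy

variable {E β : Type*} [Fintype E] [DecidableEq β] {φ : (E → β) → ℝ} {C : ℝ} {s : ℕ}

theorem le_pow_mul_of_eqOn_compl (hφ : FiniteEnergy φ C s) {S : Finset E} (hS : #S ≤ s)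
    {ω ω' : E → β} (hω : ∀ e ∉ S, ω e = ω' e) : φ ω ≤ C ^ s * φ ω' := by
  refine hφ ω ω' ((card_le_card fun e he => ?_).trans hS)
  by_contra heS
  exact (mem_filter.1 he).2 (hω e heS)

theorem pow_mul_nonneg (hφ : FiniteEnergy φ C s) (hφ0 : ∀ ω, 0 ≤ φ ω) (ω : E → β) :
    0 ≤ C ^ s * φ ω :=
  (hφ0 ω).trans (hφ ω ω (by simp))

theorem sum_le_card_mul_pow_mul [Fintype β] [Nonempty β] (hφ : FiniteEnergy φ C s)
    (hφ0 : ∀ ω, 0 ≤ φ ω) {S : Finset E} (hS : #S ≤ s) {P : Finset (E → β)} {ω' : E → β}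
    (hP : ∀ ω ∈ P, ∀ e ∉ S, ω e = ω' e) :
    ∑ ω ∈ P, φ ω ≤ (Fintype.card β * C) ^ s * φ ω' := by
  have hcard : (#P : ℝ) ≤ (Fintype.card β : ℝ) ^ s := by
    exact_mod_cast (card_le_pow_of_eqOn_compl S ω' hP).trans
      (Nat.pow_le_pow_right Fintype.card_pos hS)
  calc ∑ ω ∈ P, φ ω ≤ #P • (C ^ s * φ ω') :=
        sum_le_card_nsmul _ _ _ fun ω hω => hφ.le_pow_mul_of_eqOn_compl hS (hP ω hω)
    _ = #P * (C ^ s * φ ω') := nsmul_eq_mul _ _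
    _ ≤ Fintype.card β ^ s * (C ^ s * φ ω') :=
        mul_le_mul_of_nonneg_right hcard (hφ.pow_mul_nonneg hφ0 ω')
    _ = (Fintype.card β * C) ^ s * φ ω' := by rw [mul_pow, mul_assoc]

theorem sum_fst_le [Fintype β] [Nonempty β] {𝒪 : Type*} (hφ : FiniteEnergy φ C s)
    (hφ0 : ∀ ω, 0 ≤ φ ω) {S : Finset E} (hS : #S ≤ s) {P : Finset ((E → β) × 𝒪)}
    {y : (E → β) × 𝒪} (hP2 : ∀ x ∈ P, x.2 = y.2) (hP1 : ∀ x ∈ P, ∀ e ∉ S, x.1 e = y.1 e) :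
    ∑ x ∈ P, φ x.1 ≤ (Fintype.card β * C) ^ s * φ y.1 := by
  classical
  have hinj : Set.InjOn Prod.fst P := fun a ha b hb hab =>
    Prod.ext hab ((hP2 a ha).trans (hP2 b hb).symm)
  rw [← sum_image hinj]
  refine hφ.sum_le_card_mul_pow_mul hφ0 hS fun ω hω => ?_
  obtain ⟨x, hx, rfl⟩ := mem_image.1 hω
  exact hP1 x hx

end FiniteEnergy

theorem stmt_0_general {E 𝒪 : Type*} [Fintype E] [Fintype 𝒪]
    (p q : ℝ)
    (φ : (E → Bool) → ℝ) (hφ0 : ∀ ω, 0 ≤ φ ω)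
    (ν : ((E → Bool) × 𝒪) → ℝ)
    (hν : ∀ x, ν x = φ x.1 / (Fintype.card 𝒪 : ℝ))
    (𝓔 𝓕 : Finset ((E → Bool) × 𝒪))
    (Ψ : ((E → Bool) × 𝒪) → Finset ((E → Bool) × 𝒪))
    (hΨ𝓕 : ∀ x ∈ 𝓔, Ψ x ⊆ 𝓕)
    -- (1) the ordering is preserved
    (h1 : ∀ x ∈ 𝓔, ∀ y ∈ Ψ x, y.2 = x.2)
    -- (2) each image has at least t elements
    (t : ℝ) (ht : 0 < t) (h2 : ∀ x ∈ 𝓔, t ≤ ((Ψ x).card : ℝ))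
    -- (3) preimages differ from ω' only on a set S(ω',≼) of ≤ s edges
    (s : ℕ) (S : ((E → Bool) × 𝒪) → Finset E)
    (h3 : ∀ y ∈ 𝓕, (S y).card ≤ s ∧
      ∀ x ∈ 𝓔, y ∈ Ψ x → ∀ e, e ∉ S y → x.1 e = y.1 e)
    -- (4) finite-energy comparison
    (h4 : ∀ ω ω' : E → Bool,
      (univ.filter (fun e => ω e ≠ ω' e)).card ≤ s →
      φ ω ≤ (q / min p (1 - p)) ^ s * φ ω') :
    ∑ x ∈ 𝓔, ν x ≤ (1 / t) * (2 * (q / min p (1 - p))) ^ s * ∑ y ∈ 𝓕, ν y := by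
  classical
  set C := q / min p (1 - p)
  have hcard : (0 : ℝ) ≤ Fintype.card 𝒪 := Nat.cast_nonneg _
  have hpre : ∀ y ∈ 𝓕, ∑ x ∈ 𝓔 with y ∈ Ψ x, ν x ≤ (2 * C) ^ s * ν y := by
    intro y hy
    have hfiber := FiniteEnergy.sum_fst_le h4 hφ0 (h3 y hy).1 (P := 𝓔.filter (y ∈ Ψ ·))
      (fun x hx => (h1 x (mem_filter.1 hx).1 y (mem_filter.1 hx).2).symm)
      (fun x hx => (h3 y hy).2 x (mem_filter.1 hx).1 (mem_filter.1 hx).2)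
    rw [Fintype.card_bool, Nat.cast_ofNat] at hfiber
    simp only [hν, ← sum_div, mul_div_assoc']
    exact div_le_div_of_nonneg_right hfiber hcard
  have hmain := mul_sum_le_mul_sum_of_sum_preimage_le hΨ𝓕
    (fun x _ => by rw [hν]; exact div_nonneg (hφ0 _) hcard) h2 hpre
  rw [mul_assoc, one_div_mul_eq_div, le_div_iff₀ ht, mul_comm]
  exact hmain

/-- Multi-valued map principle (Lemma 3.2): with `ν = φ ⊗ (uniform on 𝒪)`,
events `𝓔, 𝓕 ⊆ {0,1}^E × 𝒪` and `Ψ : 𝓔 → 2^𝓕` satisfying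
(1) `Ψ` preserves the ordering coordinate, (2) `|Ψ(ω,≼)| ≥ t > 0`,
(3) preimage configurations differ from `ω'` only on a set `S(ω',≼)` of at most
`s` edges, and (4) the finite-energy comparison `φ(ω) ≤ C^s φ(ω')` for
configurations differing on at most `s` edges, with `C = q / min p (1-p)`,
one has `ν(𝓔) ≤ (1/t) (2C)^s ν(𝓕)`. -/
theorem stmt_0 {E 𝒪 : Type*} [Fintype E] [DecidableEq E] [Fintype 𝒪] [Nonempty 𝒪]
    (p q : ℝ) (hp0 : 0 < p) (hp1 : p < 1) (hq : 1 ≤ q)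
    (φ : (E → Bool) → ℝ) (hφ0 : ∀ ω, 0 ≤ φ ω) (hφ1 : ∑ ω : E → Bool, φ ω = 1)
    (ν : ((E → Bool) × 𝒪) → ℝ)
    (hν : ∀ x, ν x = φ x.1 / (Fintype.card 𝒪 : ℝ))
    (𝓔 𝓕 : Finset ((E → Bool) × 𝒪))
    (Ψ : ((E → Bool) × 𝒪) → Finset ((E → Bool) × 𝒪))
    (hΨ𝓕 : ∀ x ∈ 𝓔, Ψ x ⊆ 𝓕)
    -- (1) the ordering is preserved
    (h1 : ∀ x ∈ 𝓔, ∀ y ∈ Ψ x, y.2 = x.2)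
    -- (2) each image has at least t elements
    (t : ℝ) (ht : 0 < t) (h2 : ∀ x ∈ 𝓔, t ≤ ((Ψ x).card : ℝ))
    -- (3) preimages differ from ω' only on a set S(ω',≼) of ≤ s edges
    (s : ℕ) (S : ((E → Bool) × 𝒪) → Finset E)
    (h3 : ∀ y ∈ 𝓕, (S y).card ≤ s ∧
      ∀ x ∈ 𝓔, y ∈ Ψ x → ∀ e, e ∉ S y → x.1 e = y.1 e)
    -- (4) finite-energy comparison
    (h4 : ∀ ω ω' : E → Bool,
      (univ.filter (fun e => ω e ≠ ω' e)).card ≤ s →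
      φ ω ≤ (q / min p (1 - p)) ^ s * φ ω') :
    ∑ x ∈ 𝓔, ν x ≤ (1 / t) * (2 * (q / min p (1 - p))) ^ s * ∑ y ∈ 𝓕, ν y :=
  stmt_0_general p q φ hφ0 ν hν 𝓔 𝓕 Ψ hΨ𝓕 h1 t ht h2 s S h3 h4
end

section
/- Let $k \geq 0$ be an integer and consider a uniformly random total ordering of a finite set $F$ of at least $k+2$ elements. Fix distinct elements $e, f, e_1, \ldots, e_k \in F$ with $f \notin \{e_1, \ldots, e_k\}$. Conditionally on the event that $e$ precedes each of $e_1, \ldots, e_k$, the probability that $e$ precedes $f$ equals $\frac{k+1}{k+2}$. -/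
open Finset

/-! Conditioning on `e` preceding every element of `es` and additionally requiring it to precede
`f` both say that `e` comes first in a set: in `insert e es`, of size `k + 1`, resp. in
`insert e (insert f es)`, of size `k + 2`. Transpositions permute the orderings, so each element
of a finite set `T` is first in `T` for exactly a `1 / |T|` fraction of all orderings. The two
counts are therefore `|F|! / (k + 1)` and `|F|! / (k + 2)`, whose ratio is `(k + 1) / (k + 2)`. -/

section FirstIn

variable {F β : Type*} [Fintype F] [DecidableEq F] [Fintype β] [DecidableEq β] [LinearOrder β]

def firstIn (T : Finset F) (a : F) : Finset (F ≃ β) :=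
  univ.filter fun σ => ∀ y ∈ T, σ a ≤ σ y

lemma swap_trans_mem_firstIn {T : Finset F} {a b : F} (ha : a ∈ T) (hb : b ∈ T)
    {σ : F ≃ β} (hσ : σ ∈ firstIn T a) : (Equiv.swap a b).trans σ ∈ firstIn T b := by
  simp only [firstIn, mem_filter, mem_univ, true_and, Equiv.trans_apply,
    Equiv.swap_apply_right] at hσ ⊢
  exact fun y hy => hσ _ (mem_coe.mp <| (Equiv.bijOn_swap (s := (T : Set F)) ha hb).mapsTo hy)

lemma card_firstIn_eq {T : Finset F} {a b : F} (ha : a ∈ T) (hb : b ∈ T) :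
    #(firstIn (β := β) T a) = #(firstIn (β := β) T b) :=
  card_nbij' (fun σ : F ≃ β => (Equiv.swap a b).trans σ) (fun σ => (Equiv.swap a b).trans σ)
    (fun _ hσ => swap_trans_mem_firstIn ha hb hσ)
    (fun _ hσ => Equiv.swap_comm a b ▸ swap_trans_mem_firstIn hb ha hσ)
    (fun σ _ => by ext; simp)
    (fun σ _ => by ext; simp)

lemma pairwiseDisjoint_firstIn (T : Finset F) :
    (T : Set F).PairwiseDisjoint (firstIn (β := β) T) := by
  intro a ha b hb hab
  refine disjoint_left.mpr fun σ hσa hσb => hab (σ.injective (le_antisymm ?_ ?_))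
  · exact (mem_filter.mp hσa).2 b hb
  · exact (mem_filter.mp hσb).2 a ha

lemma biUnion_firstIn {T : Finset F} (hT : T.Nonempty) : T.biUnion (firstIn (β := β) T) = univ :=
  eq_univ_of_forall fun σ => by
    obtain ⟨a, ha, hmin⟩ := T.exists_min_image σ hT
    exact mem_biUnion.mpr ⟨a, ha, mem_filter.mpr ⟨mem_univ σ, hmin⟩⟩

lemma card_mul_card_firstIn {T : Finset F} {a : F} (ha : a ∈ T) :
    #T * #(firstIn (β := β) T a) = Fintype.card (F ≃ β) := by
  rw [← card_univ, ← biUnion_firstIn ⟨a, ha⟩, card_biUnion (pairwiseDisjoint_firstIn T),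
    sum_congr rfl fun b hb => card_firstIn_eq hb ha, sum_const, smul_eq_mul]

lemma firstIn_insert {S : Finset F} {e : F} (he : e ∉ S) :
    firstIn (β := β) (insert e S) e = univ.filter fun σ => ∀ x ∈ S, σ e < σ x := by
  ext σ
  simp only [firstIn, mem_filter, mem_univ, true_and, forall_mem_insert, le_refl]
  refine forall₂_congr fun x hx => ?_
  exact (σ.injective.ne (ne_of_mem_of_not_mem hx he).symm).le_iff_lt

lemma card_add_one_mul_card_filter_forall_lt {S : Finset F} {e : F} (he : e ∉ S) :
    (#S + 1) * #(univ.filter fun σ : F ≃ β => ∀ x ∈ S, σ e < σ x) = Fintype.card (F ≃ β) := by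
  rw [← firstIn_insert he, ← card_insert_of_notMem he]
  exact card_mul_card_firstIn (mem_insert_self e S)

end FirstIn

theorem stmt_14_general {F : Type*} [Fintype F] [DecidableEq F]
    (e f : F) (es : Finset F) (k : ℕ)
    (hk : es.card = k) (hef : e ≠ f) (he : e ∉ es) (hf : f ∉ es) :
    ((univ.filter (fun σ : F ≃ Fin (Fintype.card F) =>
        (σ e < σ f ∧ ∀ x ∈ es, σ e < σ x))).card : ℝ)
      / ((univ.filter (fun σ : F ≃ Fin (Fintype.card F) =>
        ∀ x ∈ es, σ e < σ x)).card : ℝ)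
      = (k + 1) / (k + 2) := by
  have hnum := card_add_one_mul_card_filter_forall_lt (β := Fin (Fintype.card F))
    (S := insert f es) (e := e) (by simp [hef, he])
  have hden := card_add_one_mul_card_filter_forall_lt (β := Fin (Fintype.card F)) he
  simp only [forall_mem_insert, card_insert_of_notMem hf, hk] at hnum
  rw [hk] at hden
  have hcard_pos : 0 < Fintype.card (F ≃ Fin (Fintype.card F)) :=
    Fintype.card_pos_iff.mpr ⟨Fintype.equivFin F⟩
  have hden_pos : 0 < #(univ.filter fun σ : F ≃ Fin (Fintype.card F) => ∀ x ∈ es, σ e < σ x) :=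
    Nat.pos_of_mul_pos_left (hden ▸ hcard_pos)
  rw [div_eq_div_iff (by positivity) (by positivity)]
  exact_mod_cast (by linarith : _ * (k + 2) = (k + 1) * _)

/-- Under a uniformly random total ordering of a finite set `F` (encoded as a
uniformly random bijection `σ : F ≃ Fin |F|`, with `x` preceding `y` iff
`σ x < σ y`), conditionally on `e` preceding each of `k` fixed elements
`e₁, …, e_k` (distinct from `e` and `f`), the probability that `e` precedes `f`
equals `(k+1)/(k+2)`. -/
theorem stmt_14 {F : Type*} [Fintype F] [DecidableEq F]
    (e f : F) (es : Finset F) (k : ℕ)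
    (hk : es.card = k) (hef : e ≠ f) (he : e ∉ es) (hf : f ∉ es)
    (hcard : k + 2 ≤ Fintype.card F) :
    ((univ.filter (fun σ : F ≃ Fin (Fintype.card F) =>
        (σ e < σ f ∧ ∀ x ∈ es, σ e < σ x))).card : ℝ)
      / ((univ.filter (fun σ : F ≃ Fin (Fintype.card F) =>
        ∀ x ∈ es, σ e < σ x)).card : ℝ)
      = (k + 1) / (k + 2) :=
  stmt_14_general e f es k hk hef he hf
end
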